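/- Let n be a natural number and let A and B be linear operators on the finite-dimensional complex inner product space ℂⁿ satisfying range(A) = range(A*) and range(B) = range(B*) (i.e., A and B are EP matrices). Then range(AB) = range((AB)*) (i.e., AB is EP) if and only if range(AB) ⊆ range(B) and ker(A) ⊆ ker(AB). -/

import Mathlib

/-!
An EP operator `T` satisfies `ker T = (range T)ᗮ`, so `E = range T ⊕ ker T`.

If `AB` is EP, then `range (AB) = range (B* A*) ⊆ range B* = range B` and
`ker A = (range A)ᗮ ⊆ (range AB)ᗮ = ker (AB)`.

Conversely, since `rank (AB) = rank (AB)*`, it suffices to show `ker (AB) ⟂ range (AB)`.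
Write `y ∈ ker (AB)` as `p + q` with `p ∈ range B`, `q ∈ ker B`. The subspace
`range B ∩ ker A` is `B`-invariant (as `ker A ⊆ ker (AB)`) and `B` is injective on `range B`,
so `B` permutes it; since `B p = B y` lies in it, so does `p`. Hence
`ker (AB) ⊆ ker A + ker B = (range A)ᗮ + (range B)ᗮ ⊆ (range AB)ᗮ`.
-/

open LinearMap Submodule

section InvariantSubspace

variable {K V W : Type*} [DivisionRing K] [AddCommGroup V] [Module K V] [AddCommGroup W]
  [Module K W]

theorem Submodule.mem_of_apply_mem_of_injOn {f : V →ₗ[K] V} {M N : Submodule K V}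
    [FiniteDimensional K N] (hNM : N ≤ M) (hf : Set.InjOn f M) (hN : Set.MapsTo f N N) {x : V}
    (hx : x ∈ M) (hfx : f x ∈ N) : x ∈ N := by
  have hsurj : Function.Surjective (f.restrict hN) :=
    injective_iff_surjective.mp fun a b hab ↦
      Subtype.ext (hf (hNM a.2) (hNM b.2) (congrArg Subtype.val hab))
  obtain ⟨y, hy⟩ := hsurj ⟨f x, hfx⟩
  exact hf (hNM y.2) hx (congrArg Subtype.val hy) ▸ y.2

theorem LinearMap.ker_comp_le_ker_sup_ker [FiniteDimensional K V] {A : V →ₗ[K] W}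
    {B : V →ₗ[K] V} (hB : IsCompl (range B) (ker B)) (hAB : ker A ≤ ker (A ∘ₗ B)) :
    ker (A ∘ₗ B) ≤ ker A ⊔ ker B := by
  intro y hy
  obtain ⟨p, hp, q, hq, rfl⟩ := mem_sup.mp (hB.sup_eq_top ▸ mem_top : y ∈ range B ⊔ ker B)
  have hBp : B p = B (p + q) := by rw [map_add, mem_ker.mp hq, add_zero]
  have hinj : Set.InjOn B (range B) := injOn_of_disjoint_ker le_rfl hB.disjoint
  have hmaps : Set.MapsTo B (range B ⊓ ker A : Submodule K V) (range B ⊓ ker A) :=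
    fun x hx ↦ ⟨mem_range_self B x, hAB hx.2⟩
  have hpA : p ∈ range B ⊓ ker A :=
    mem_of_apply_mem_of_injOn inf_le_left hinj hmaps hp ⟨mem_range_self B p, hBp ▸ hy⟩
  exact add_mem_sup hpA.2 hq

end InvariantSubspace

namespace ContinuousLinearMap

variable {𝕜 E : Type*} [RCLike 𝕜] [NormedAddCommGroup E] [InnerProductSpace 𝕜 E]
  [CompleteSpace E]

def IsEP (T : E →L[𝕜] E) : Prop :=
  range (T : E →ₗ[𝕜] E) = range (adjoint T : E →ₗ[𝕜] E)

theorem IsEP.orthogonal_range {T : E →L[𝕜] E} (hT : T.IsEP) :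
    (range (T : E →ₗ[𝕜] E))ᗮ = ker (T : E →ₗ[𝕜] E) := by
  unfold IsEP at hT
  rw [hT, ContinuousLinearMap.orthogonal_range, adjoint_adjoint]

variable [FiniteDimensional 𝕜 E]

theorem IsEP.isCompl_range_ker {T : E →L[𝕜] E} (hT : T.IsEP) :
    IsCompl (range (T : E →ₗ[𝕜] E)) (ker (T : E →ₗ[𝕜] E)) :=
  hT.orthogonal_range ▸ isCompl_orthogonal _

theorem orthogonal_ker_eq_range_adjoint (T : E →L[𝕜] E) :
    (ker (T : E →ₗ[𝕜] E))ᗮ = range (adjoint T : E →ₗ[𝕜] E) :=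
  T.orthogonal_ker.trans (closed_of_finiteDimensional _).submodule_topologicalClosure_eq

theorem finrank_range_adjoint (T : E →L[𝕜] E) :
    Module.finrank 𝕜 (range (adjoint T : E →ₗ[𝕜] E)) =
      Module.finrank 𝕜 (range (T : E →ₗ[𝕜] E)) := by
  have := LinearMap.finrank_range_adjoint (T : E →ₗ[𝕜] E)
  rwa [adjoint_eq_toCLM_adjoint] at this

theorem isEP_iff_ker_le_orthogonal_range {T : E →L[𝕜] E} :
    T.IsEP ↔ ker (T : E →ₗ[𝕜] E) ≤ (range (T : E →ₗ[𝕜] E))ᗮ := by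
  rw [le_orthogonal_iff_le_orthogonal, orthogonal_ker_eq_range_adjoint]
  exact ⟨le_of_eq, fun h ↦ eq_of_le_of_finrank_eq h T.finrank_range_adjoint.symm⟩

theorem IsEP.comp_iff {A B : E →L[𝕜] E} (hA : A.IsEP) (hB : B.IsEP) :
    (A ∘L B).IsEP ↔ range (A ∘L B : E →ₗ[𝕜] E) ≤ range (B : E →ₗ[𝕜] E) ∧
      ker (A : E →ₗ[𝕜] E) ≤ ker (A ∘L B : E →ₗ[𝕜] E) := by
  have hrA : range (A ∘L B : E →ₗ[𝕜] E) ≤ range (A : E →ₗ[𝕜] E) :=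
    range_comp_le_range _ _
  constructor
  · intro hAB
    refine ⟨?_, ?_⟩
    · calc range (A ∘L B : E →ₗ[𝕜] E)
          = range (adjoint B ∘L adjoint A : E →ₗ[𝕜] E) := by rw [hAB, adjoint_comp]
        _ ≤ range (adjoint B : E →ₗ[𝕜] E) := range_comp_le_range _ _
        _ = range (B : E →ₗ[𝕜] E) := hB.symm
    · rw [← hA.orthogonal_range, ← hAB.orthogonal_range]
      exact orthogonal_le hrA
  · rintro ⟨hr, hk⟩
    refine isEP_iff_ker_le_orthogonal_range.mpr ?_
    calc ker (A ∘L B : E →ₗ[𝕜] E)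
        ≤ ker (A : E →ₗ[𝕜] E) ⊔ ker (B : E →ₗ[𝕜] E) :=
          ker_comp_le_ker_sup_ker hB.isCompl_range_ker hk
      _ ≤ (range (A ∘L B : E →ₗ[𝕜] E))ᗮ := by
        rw [← hA.orthogonal_range, ← hB.orthogonal_range]
        exact sup_le (orthogonal_le hrA) (orthogonal_le hr)

end ContinuousLinearMap

theorem stmt19 (n : ℕ)
    (A B : EuclideanSpace ℂ (Fin n) →L[ℂ] EuclideanSpace ℂ (Fin n))
    (hA : LinearMap.range (A : EuclideanSpace ℂ (Fin n) →ₗ[ℂ] EuclideanSpace ℂ (Fin n)) = LinearMap.range (ContinuousLinearMap.adjoint A : EuclideanSpace ℂ (Fin n) →ₗ[ℂ] EuclideanSpace ℂ (Fin n)))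
    (hB : LinearMap.range (B : EuclideanSpace ℂ (Fin n) →ₗ[ℂ] EuclideanSpace ℂ (Fin n)) = LinearMap.range (ContinuousLinearMap.adjoint B : EuclideanSpace ℂ (Fin n) →ₗ[ℂ] EuclideanSpace ℂ (Fin n))) :
    LinearMap.range (A ∘L B : EuclideanSpace ℂ (Fin n) →ₗ[ℂ] EuclideanSpace ℂ (Fin n)) = LinearMap.range (ContinuousLinearMap.adjoint (A ∘L B) : EuclideanSpace ℂ (Fin n) →ₗ[ℂ] EuclideanSpace ℂ (Fin n)) ↔
      LinearMap.range (A ∘L B : EuclideanSpace ℂ (Fin n) →ₗ[ℂ] EuclideanSpace ℂ (Fin n)) ≤ LinearMap.range (B : EuclideanSpace ℂ (Fin n) →ₗ[ℂ] EuclideanSpace ℂ (Fin n)) ∧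
        LinearMap.ker (A : EuclideanSpace ℂ (Fin n) →ₗ[ℂ] EuclideanSpace ℂ (Fin n)) ≤ LinearMap.ker ((A ∘L B : EuclideanSpace ℂ (Fin n) →ₗ[ℂ] EuclideanSpace ℂ (Fin n))) := by
  exact ContinuousLinearMap.IsEP.comp_iff hA hB
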